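/- arXiv:2601.11900 — 5 statements merged into one kernel-verified Lean document; each statement's English description precedes it below -/
import Mathlib

section
/- Discrete summation-by-parts dissipation identity: for any grid function f, with u = f/M (pointwise) and the conservative discrete Fokker–Planck operator L_h with zero-flux velocity boundaries, one has Σ_{p,q} [L_h f]_{p,q} · u_{p,q} · Δx Δv = − (Δx/Δv) Σ_{p=1}^{N_x} Σ_{q=1}^{N_v−1} M_{p,q+1/2} (u_{p,q+1} − u_{p,q})², where M_{p,q+1/2} = sqrt(M_{p,q} M_{p,q+1}). In particular the quadratic form ⟨L_h f, f/M⟩ is nonpositive. -/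
/- Summation by parts moves the difference of the fluxes onto `u`; the zero-flux boundary
conditions kill the boundary terms, and each remaining term `J_{q+1/2} (u_{q+1} - u_q)` is
`M_{q+1/2} (u_{q+1} - u_q)² / Δv ≥ 0`. -/

open Finset

theorem sum_Icc_sub_mul_eq_sub_sum_mul_sub {R : Type*} [CommRing R] (a b : ℕ → R) (n : ℕ) :
    ∑ q ∈ Icc 1 (n + 1), (a q - a (q - 1)) * b q
      = a (n + 1) * b (n + 1) - a 0 * b 1 - ∑ q ∈ Icc 1 n, a q * (b (q + 1) - b q) := by
  induction n with
  | zero =>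
    simp only [zero_add, Icc_self, sum_singleton, tsub_self, Order.lt_one_iff,
      Icc_eq_empty_of_lt, sum_empty, sub_zero]
    ring
  | succ m ih =>
    rw [sum_Icc_succ_top (by omega), ih, sum_Icc_succ_top (by omega), Nat.add_sub_cancel]
    ring

theorem sum_Icc_sub_mul_eq_neg_sum_mul_sub {R : Type*} [CommRing R] {a : ℕ → R} (b : ℕ → R)
    {N : ℕ} (h0 : a 0 = 0) (hN : a N = 0) :
    ∑ q ∈ Icc 1 N, (a q - a (q - 1)) * b q = -∑ q ∈ Icc 1 (N - 1), a q * (b (q + 1) - b q) := by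
  cases N with
  | zero => simp
  | succ n => rw [sum_Icc_sub_mul_eq_sub_sum_mul_sub, h0, hN, Nat.add_sub_cancel]; ring

theorem fokker_planck_summation_by_parts_general
    (Nx Nv : ℕ) (Δx Δv : ℝ) (hΔx : 0 < Δx) (hΔv : 0 < Δv)
    (M : ℕ → ℕ → ℝ)
    (u : ℕ → ℕ → ℝ)
    (J : ℕ → ℕ → ℝ)
    (hJ0 : ∀ p, J p 0 = 0) (hJN : ∀ p, J p Nv = 0)
    (hJ : ∀ p q, 1 ≤ q → q ≤ Nv - 1 →
      J p q = Real.sqrt (M p q * M p (q+1)) * (u p (q+1) - u p q) / Δv)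
    (Lh : ℕ → ℕ → ℝ)
    (hLh : ∀ p q, 1 ≤ q → q ≤ Nv → Lh p q = (J p q - J p (q-1)) / Δv) :
    (∑ p ∈ Finset.Icc 1 Nx, ∑ q ∈ Finset.Icc 1 Nv, Lh p q * u p q * (Δx * Δv))
      = -(Δx / Δv) * ∑ p ∈ Finset.Icc 1 Nx, ∑ q ∈ Finset.Icc 1 (Nv - 1),
          Real.sqrt (M p q * M p (q+1)) * (u p (q+1) - u p q)^2
    ∧ (∑ p ∈ Finset.Icc 1 Nx, ∑ q ∈ Finset.Icc 1 Nv, Lh p q * u p q * (Δx * Δv)) ≤ 0 := by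
  have row (p : ℕ) : ∑ q ∈ Icc 1 Nv, Lh p q * u p q * (Δx * Δv)
      = -(Δx / Δv) * ∑ q ∈ Icc 1 (Nv - 1),
          Real.sqrt (M p q * M p (q+1)) * (u p (q+1) - u p q)^2 :=
    calc ∑ q ∈ Icc 1 Nv, Lh p q * u p q * (Δx * Δv)
        = Δx * ∑ q ∈ Icc 1 Nv, (J p q - J p (q - 1)) * u p q := by
          rw [mul_sum]
          refine sum_congr rfl fun q hq => ?_
          rw [hLh p q (mem_Icc.1 hq).1 (mem_Icc.1 hq).2]
          field_simp
      _ = -Δx * ∑ q ∈ Icc 1 (Nv - 1), J p q * (u p (q + 1) - u p q) := by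
          rw [sum_Icc_sub_mul_eq_neg_sum_mul_sub _ (hJ0 p) (hJN p)]; ring
      _ = _ := by
          rw [mul_sum, mul_sum]
          refine sum_congr rfl fun q hq => ?_
          rw [hJ p q (mem_Icc.1 hq).1 (mem_Icc.1 hq).2]
          field_simp
  have identity : ∑ p ∈ Icc 1 Nx, ∑ q ∈ Icc 1 Nv, Lh p q * u p q * (Δx * Δv)
      = -(Δx / Δv) * ∑ p ∈ Icc 1 Nx, ∑ q ∈ Icc 1 (Nv - 1),
          Real.sqrt (M p q * M p (q+1)) * (u p (q+1) - u p q)^2 := by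
    rw [mul_sum]; exact sum_congr rfl fun p _ => row p
  refine ⟨identity, identity ▸ mul_nonpos_of_nonpos_of_nonneg ?_ ?_⟩
  · exact neg_nonpos.2 (div_nonneg hΔx.le hΔv.le)
  · exact sum_nonneg fun p _ => sum_nonneg fun q _ => by positivity

/-- discrete summation-by-parts dissipation identity for the conservative
Fokker–Planck stencil, and nonpositivity of the quadratic form `⟨L_h f, f/M⟩`. -/
theorem fokker_planck_summation_by_parts
    (Nx Nv : ℕ) (hNx : 1 ≤ Nx) (hNv : 1 ≤ Nv) (Δx Δv : ℝ) (hΔx : 0 < Δx) (hΔv : 0 < Δv)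
    (M f : ℕ → ℕ → ℝ) (hM : ∀ p q, 0 < M p q)
    (u : ℕ → ℕ → ℝ) (hu : ∀ p q, u p q = f p q / M p q)
    (J : ℕ → ℕ → ℝ)
    (hJ0 : ∀ p, J p 0 = 0) (hJN : ∀ p, J p Nv = 0)
    (hJ : ∀ p q, 1 ≤ q → q ≤ Nv - 1 →
      J p q = Real.sqrt (M p q * M p (q+1)) * (u p (q+1) - u p q) / Δv)
    (Lh : ℕ → ℕ → ℝ)
    (hLh : ∀ p q, 1 ≤ q → q ≤ Nv → Lh p q = (J p q - J p (q-1)) / Δv) :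
    (∑ p ∈ Finset.Icc 1 Nx, ∑ q ∈ Finset.Icc 1 Nv, Lh p q * u p q * (Δx * Δv))
      = -(Δx / Δv) * ∑ p ∈ Finset.Icc 1 Nx, ∑ q ∈ Finset.Icc 1 (Nv - 1),
          Real.sqrt (M p q * M p (q+1)) * (u p (q+1) - u p q)^2
    ∧ (∑ p ∈ Finset.Icc 1 Nx, ∑ q ∈ Finset.Icc 1 Nv, Lh p q * u p q * (Δx * Δv)) ≤ 0 :=
  fokker_planck_summation_by_parts_general Nx Nv Δx Δv hΔx hΔv M u J hJ0 hJN hJ Lh hLh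
end

section
/- Discrete Poincaré inequality on a uniform 1D grid: for any u : {1,…,N} → ℝ with arithmetic mean ū = (1/N) Σ_q u_q, one has (1/Δv²) Σ_{q=1}^{N−1} (u_{q+1} − u_q)² ≥ λ_N Σ_{q=1}^{N} (u_q − ū)², where λ_N = (4/Δv²) sin²(π/(2N)). -/
/-!
With `μ = 4 sin² (π / (2N))`, the sequence `φ q = sin (q π / N)` is positive for `0 < q < N`,
vanishes at `q = 0` and `q = N`, and solves `φ q + φ (q+2) = (2 - μ) φ (q+1)`. Writing `w = φ g`,
summation by parts turns `∑ (w (q+1) - w q)²` into `μ ∑ w² + ∑ φ q φ (q+1) (g (q+1) - g q)²`,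
which is the Poincaré inequality with constant `μ` for sequences vanishing at both ends.
For a mean-zero `v`, the partial sums `W` of `v` vanish at both ends and have increments `v`;
summation by parts gives `∑ v² = -∑ W (Δv)`, and Cauchy–Schwarz together with `μ ∑ W² ≤ ∑ v²`
yields `μ ∑ v² ≤ ∑ (Δv)²`.
-/

open Real Finset

theorem sum_Icc_one_eq_sum_range {M : Type*} [AddCommMonoid M] (f : ℕ → M) (n : ℕ) :
    ∑ q ∈ Icc 1 n, f q = ∑ q ∈ range n, f (q + 1) := by
  induction n with
  | zero => simp
  | succ n ih => rw [sum_Icc_succ_top (by omega), ih, sum_range_succ]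

theorem sum_range_mul_sub_eq_neg_sum {R : Type*} [CommRing R] {a s : ℕ → R} {N : ℕ}
    (h0 : s 0 = 0) (hN : s N = 0) :
    ∑ q ∈ range N, a q * (s (q + 1) - s q) =
      -∑ q ∈ range N, s (q + 1) * (a (q + 1) - a q) := by
  have hshift : ∑ q ∈ range N, a q * s q = ∑ q ∈ range N, a (q + 1) * s (q + 1) := by
    have h := sum_range_succ (fun q => a q * s q) N
    rw [sum_range_succ'] at h
    simpa [h0, hN] using h.symm
  rw [← sum_neg_distrib]
  simp only [mul_sub, sum_sub_distrib, hshift]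
  rw [← sum_sub_distrib]
  exact sum_congr rfl fun q _ => by ring

theorem sum_sq_sub_eq_ground_state {R : Type*} [CommRing R] {φ : ℕ → R} {μ : R} {N : ℕ}
    (h0 : φ 0 = 0) (hN : φ N = 0) (hrec : ∀ q, φ q + φ (q + 2) = (2 - μ) * φ (q + 1))
    (g : ℕ → R) :
    ∑ q ∈ range N, (φ (q + 1) * g (q + 1) - φ q * g q) ^ 2 =
      ∑ q ∈ range N, φ q * φ (q + 1) * (g (q + 1) - g q) ^ 2 +
        μ * ∑ q ∈ range N, (φ (q + 1) * g (q + 1)) ^ 2 := by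
  set s : ℕ → R := fun q => φ q * g q ^ 2
  have hparts := sum_range_mul_sub_eq_neg_sum (a := fun q => φ (q + 1) - φ q) (s := s) (N := N)
    (by simp [s, h0]) (by simp [s, hN])
  calc _ = ∑ q ∈ range N, (φ q * φ (q + 1) * (g (q + 1) - g q) ^ 2 +
          (φ (q + 1) - φ q) * (s (q + 1) - s q)) :=
        sum_congr rfl fun q _ => by simp only [s]; ring
    _ = _ := by
        rw [sum_add_distrib, hparts, mul_sum, ← sum_neg_distrib]
        congr 1
        refine sum_congr rfl fun q _ => ?_
        simp only [s]
        linear_combination -(φ (q + 1) * g (q + 1) ^ 2) * hrec q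

theorem dirichlet_poincare_of_ground_state {K : Type*} [Field K] [LinearOrder K]
    [IsStrictOrderedRing K] {φ : ℕ → K} {μ : K} {N : ℕ}
    (h0 : φ 0 = 0) (hN : φ N = 0) (hpos : ∀ q, 0 < q → q < N → 0 < φ q)
    (hrec : ∀ q, φ q + φ (q + 2) = (2 - μ) * φ (q + 1))
    {w : ℕ → K} (hw0 : w 0 = 0) (hwN : w N = 0) :
    μ * ∑ q ∈ range N, w (q + 1) ^ 2 ≤ ∑ q ∈ range N, (w (q + 1) - w q) ^ 2 := by
  have hφ_nonneg : ∀ q ≤ N, 0 ≤ φ q := by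
    intro q hq
    obtain rfl | hq0 := Nat.eq_zero_or_pos q
    · exact h0.ge
    obtain rfl | hqN := hq.eq_or_lt
    · exact hN.ge
    · exact (hpos q hq0 hqN).le
  have hw : ∀ q ≤ N, φ q * (w q / φ q) = w q := by
    intro q hq
    obtain rfl | hq0 := Nat.eq_zero_or_pos q
    · simp [hw0]
    obtain rfl | hqN := hq.eq_or_lt
    · simp [hwN]
    · exact mul_div_cancel₀ _ (hpos q hq0 hqN).ne'
  have hidentity := sum_sq_sub_eq_ground_state h0 hN hrec (fun q => w q / φ q)
  have hsq : ∑ q ∈ range N, (φ (q + 1) * (w (q + 1) / φ (q + 1))) ^ 2 =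
      ∑ q ∈ range N, w (q + 1) ^ 2 :=
    sum_congr rfl fun q hq => by rw [hw (q + 1) (mem_range.1 hq)]
  rw [hsq, sum_congr rfl fun q hq => by
    rw [hw q (mem_range.1 hq).le, hw (q + 1) (mem_range.1 hq)]] at hidentity
  have hcross : 0 ≤ ∑ q ∈ range N, φ q * φ (q + 1) * (w (q + 1) / φ (q + 1) - w q / φ q) ^ 2 :=
    sum_nonneg fun q hq => by
      have := hφ_nonneg q (mem_range.1 hq).le
      have := hφ_nonneg (q + 1) (mem_range.1 hq)
      positivity
  linarith

theorem neumann_poincare_of_dirichlet_poincare {K : Type*} [CommRing K] [LinearOrder K]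
    [IsStrictOrderedRing K] {μ : K} {N : ℕ} (hμ : 0 ≤ μ)
    (hdirichlet : ∀ w : ℕ → K, w 0 = 0 → w N = 0 →
      μ * ∑ q ∈ range N, w (q + 1) ^ 2 ≤ ∑ q ∈ range N, (w (q + 1) - w q) ^ 2)
    {v : ℕ → K} (hv : ∑ q ∈ range N, v q = 0) :
    μ * ∑ q ∈ range N, v q ^ 2 ≤ ∑ q ∈ range (N - 1), (v (q + 1) - v q) ^ 2 := by
  set W : ℕ → K := fun q => ∑ j ∈ range q, v j
  have hW0 : W 0 = 0 := sum_range_zero v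
  have hdiff : ∀ q, W (q + 1) - W q = v q := fun q => by simp [W, sum_range_succ]
  have hW := hdirichlet W hW0 hv
  simp only [hdiff] at hW
  obtain _ | M := N
  · simp
  have hWM : W (M + 1) = 0 := hv
  have hparts : ∑ q ∈ range (M + 1), v q ^ 2 =
      -∑ q ∈ range M, W (q + 1) * (v (q + 1) - v q) := by
    calc ∑ q ∈ range (M + 1), v q ^ 2 = ∑ q ∈ range (M + 1), v q * (W (q + 1) - W q) := by
          simp only [hdiff, sq]
      _ = -∑ q ∈ range (M + 1), W (q + 1) * (v (q + 1) - v q) :=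
          sum_range_mul_sub_eq_neg_sum hW0 hWM
      _ = _ := by simp [sum_range_succ, hWM]
  have hcauchy := sum_mul_sq_le_sq_mul_sq (range M) (fun q => W (q + 1)) fun q => v (q + 1) - v q
  have hsub : ∑ q ∈ range M, W (q + 1) ^ 2 ≤ ∑ q ∈ range (M + 1), W (q + 1) ^ 2 := by
    simp [sum_range_succ, sq_nonneg]
  simp only [Nat.add_sub_cancel]
  set E := ∑ q ∈ range (M + 1), v q ^ 2
  set D := ∑ q ∈ range M, (v (q + 1) - v q) ^ 2
  have hD : 0 ≤ D := sum_nonneg fun q _ => sq_nonneg _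
  have hE : 0 ≤ E := sum_nonneg fun q _ => sq_nonneg _
  rcases hE.eq_or_lt with hE0 | hEpos
  · rw [← hE0, mul_zero]; exact hD
  have hE_sq : E ^ 2 ≤ (∑ q ∈ range (M + 1), W (q + 1) ^ 2) * D := by
    rw [hparts, neg_sq]
    exact hcauchy.trans (mul_le_mul_of_nonneg_right hsub hD)
  have : μ * E * E ≤ D * E := by
    nlinarith [mul_le_mul_of_nonneg_left hE_sq hμ, mul_le_mul_of_nonneg_right hW hD]
  exact le_of_mul_le_mul_right this hEpos

theorem dirichlet_poincare_sin (N : ℕ) {w : ℕ → ℝ} (hw0 : w 0 = 0) (hwN : w N = 0) :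
    4 * sin (π / (2 * N)) ^ 2 * ∑ q ∈ range N, w (q + 1) ^ 2 ≤
      ∑ q ∈ range N, (w (q + 1) - w q) ^ 2 := by
  refine dirichlet_poincare_of_ground_state (φ := fun q => sin (q * π / N)) (by simp) ?_ ?_ ?_
    hw0 hwN
  · rcases eq_or_ne N 0 with rfl | hN
    · simp
    · simp [mul_div_cancel_left₀ π (Nat.cast_ne_zero.2 hN)]
  · intro q hq0 hqN
    have hN : (0 : ℝ) < N := by exact_mod_cast hq0.trans hqN
    refine sin_pos_of_pos_of_lt_pi (by positivity) ?_
    rw [div_lt_iff₀ hN, mul_comm π]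
    exact mul_lt_mul_of_pos_right (Nat.cast_lt.2 hqN) pi_pos
  · intro q
    have hcos : 2 - 4 * sin (π / (2 * N)) ^ 2 = 2 * cos (π / N) := by
      rw [sin_sq_eq_half_sub, ← mul_div_assoc, mul_div_mul_left _ _ two_ne_zero]
      ring
    simp only [hcos]
    push_cast
    rw [show ((q : ℝ) + 2) * π / N = (q + 1) * π / N + π / N by ring,
      show (q : ℝ) * π / N = (q + 1) * π / N - π / N by ring, sin_add, sin_sub]
    ring

theorem discrete_poincare_inequality_general
    (N : ℕ) (Δv : ℝ)
    (u : ℕ → ℝ)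
    (ubar : ℝ) (hubar : ubar = (1 / (N : ℝ)) * ∑ q ∈ Finset.Icc 1 N, u q) :
    (1 / Δv^2) * ∑ q ∈ Finset.Icc 1 (N - 1), (u (q+1) - u q)^2
      ≥ (4 / Δv^2) * Real.sin (π / (2 * N))^2 *
          ∑ q ∈ Finset.Icc 1 N, (u q - ubar)^2 := by
  set v : ℕ → ℝ := fun q => u (q + 1) - ubar
  have hmean : ∑ q ∈ range N, v q = 0 := by
    rcases eq_or_ne N 0 with rfl | hN
    · simp
    simp only [v, sum_sub_distrib, sum_const, card_range, nsmul_eq_mul, ←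
      sum_Icc_one_eq_sum_range, hubar]
    field_simp
    ring
  have hpoincare := neumann_poincare_of_dirichlet_poincare (by positivity)
    (fun _ => dirichlet_poincare_sin N) hmean
  simp only [sum_Icc_one_eq_sum_range]
  calc (4 / Δv ^ 2) * sin (π / (2 * N)) ^ 2 * ∑ q ∈ range N, (u (q + 1) - ubar) ^ 2
      = (1 / Δv ^ 2) * (4 * sin (π / (2 * N)) ^ 2 * ∑ q ∈ range N, v q ^ 2) := by ring
    _ ≤ (1 / Δv ^ 2) * ∑ q ∈ range (N - 1), (v (q + 1) - v q) ^ 2 := by gcongr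
    _ = _ := by simp only [v, sub_sub_sub_cancel_right]

/-- discrete Poincaré inequality on a uniform 1D grid, with the sharp
constant `λ_N = (4/Δv²) sin²(π/(2N))` (smallest nonzero eigenvalue of the discrete
Neumann Laplacian on `N` points). -/
theorem discrete_poincare_inequality
    (N : ℕ) (hN : 2 ≤ N) (Δv : ℝ) (hΔv : 0 < Δv)
    (u : ℕ → ℝ)
    (ubar : ℝ) (hubar : ubar = (1 / (N : ℝ)) * ∑ q ∈ Finset.Icc 1 N, u q) :
    (1 / Δv^2) * ∑ q ∈ Finset.Icc 1 (N - 1), (u (q+1) - u q)^2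
      ≥ (4 / Δv^2) * Real.sin (π / (2 * N))^2 *
          ∑ q ∈ Finset.Icc 1 N, (u q - ubar)^2 :=
  discrete_poincare_inequality_general N Δv u ubar hubar
end

section
/- Norm comparison under weighted mean-zero constraint: let u, M : {1,…,N} → ℝ with M positive, Σ_q M_q Δv = 1, Σ_q u_q M_q Δv = 0, and suppose Σ_q M_q² Δv ≤ L·M_max where L = N·Δv and M_max = max_q M_q. Then the discrete L² norms satisfy ‖u‖² ≤ (1 + sqrt(L·M_max))² · ‖u − ū‖², where ū is the arithmetic mean of u and ‖φ‖² = Σ_q φ_q² Δv. -/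
/-! Write `w = u - ū`, which has plain mean zero, so `‖u‖² = ‖w‖² + L ū²`. Since `⟨M, 1⟩ = 1` and
`⟨u, M⟩ = 0`, the constant is recovered as `ū = -⟨w, M⟩`, and Cauchy–Schwarz together with
`‖M‖² ≤ M_max ⟨M, 1⟩ = M_max` gives `ū² ≤ M_max ‖w‖²`. Hence
`‖u‖² ≤ (1 + L M_max) ‖w‖² ≤ (1 + √(L M_max))² ‖w‖²`. -/

open Finset

namespace Finset

variable {ι : Type*} (s : Finset ι)

lemma sum_sub_mean_eq_zero (hs : s.Nonempty) (f : ι → ℝ) :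
    ∑ i ∈ s, (f i - (1 / (#s : ℝ)) * ∑ j ∈ s, f j) = 0 := by
  have hcard : (#s : ℝ) ≠ 0 := by exact_mod_cast hs.card_pos.ne'
  rw [sum_sub_distrib, sum_const, nsmul_eq_mul]
  field_simp
  ring

lemma sum_sq_mul_eq_of_sum_sub_eq_zero {f : ι → ℝ} {c : ℝ} (hf : ∑ i ∈ s, (f i - c) = 0)
    (d : ℝ) : ∑ i ∈ s, f i ^ 2 * d = ∑ i ∈ s, (f i - c) ^ 2 * d + c ^ 2 * (#s * d) := by
  have hexpand : ∀ i, f i ^ 2 * d = (f i - c) ^ 2 * d + (2 * c * d) * (f i - c) + c ^ 2 * d :=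
    fun i => by ring
  simp only [hexpand, sum_add_distrib, ← mul_sum, hf, sum_const, nsmul_eq_mul]
  ring

lemma sum_mul_mul_sq_le {f g : ι → ℝ} {d : ℝ} (hd : 0 ≤ d) :
    (∑ i ∈ s, f i * g i * d) ^ 2 ≤ (∑ i ∈ s, f i ^ 2 * d) * ∑ i ∈ s, g i ^ 2 * d :=
  sum_sq_le_sum_mul_sum_of_sq_le_mul s (fun _ _ => by positivity) (fun _ _ => by positivity)
    (fun _ _ => le_of_eq (by ring))

lemma sum_sq_mul_le_mul_sum_mul {g : ι → ℝ} {m d : ℝ} (hd : 0 ≤ d)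
    (hg : ∀ i ∈ s, 0 ≤ g i) (hgm : ∀ i ∈ s, g i ≤ m) :
    ∑ i ∈ s, g i ^ 2 * d ≤ m * ∑ i ∈ s, g i * d := by
  rw [mul_sum]
  refine sum_le_sum fun i hi => ?_
  have := mul_le_mul_of_nonneg_right (hgm i hi) (mul_nonneg (hg i hi) hd)
  linarith

lemma eq_neg_sum_sub_mul_of_sum_mul_eq_zero {f M : ι → ℝ} {d : ℝ}
    (hMnorm : ∑ i ∈ s, M i * d = 1) (horth : ∑ i ∈ s, f i * M i * d = 0) (c : ℝ) :
    c = -∑ i ∈ s, (f i - c) * M i * d := by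
  have hsplit : ∑ i ∈ s, (f i - c) * M i * d = ∑ i ∈ s, f i * M i * d - c * ∑ i ∈ s, M i * d := by
    rw [mul_sum, ← sum_sub_distrib]
    exact sum_congr rfl fun i _ => by ring
  rw [hsplit, horth, hMnorm]
  ring

lemma sq_le_mul_sum_sub_sq_of_sum_mul_eq_zero {f M : ι → ℝ} {d m : ℝ} (hd : 0 ≤ d)
    (hM : ∀ i ∈ s, 0 ≤ M i) (hMm : ∀ i ∈ s, M i ≤ m)
    (hMnorm : ∑ i ∈ s, M i * d = 1) (horth : ∑ i ∈ s, f i * M i * d = 0) (c : ℝ) :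
    c ^ 2 ≤ m * ∑ i ∈ s, (f i - c) ^ 2 * d := by
  have hMsq : ∑ i ∈ s, M i ^ 2 * d ≤ m := by
    simpa [hMnorm] using sum_sq_mul_le_mul_sum_mul s hd hM hMm
  have hw : 0 ≤ ∑ i ∈ s, (f i - c) ^ 2 * d := sum_nonneg fun _ _ => by positivity
  calc c ^ 2 = (∑ i ∈ s, (f i - c) * M i * d) ^ 2 := by
        nth_rewrite 1 [eq_neg_sum_sub_mul_of_sum_mul_eq_zero s hMnorm horth c]
        rw [neg_sq]
    _ ≤ (∑ i ∈ s, (f i - c) ^ 2 * d) * ∑ i ∈ s, M i ^ 2 * d := sum_mul_mul_sq_le s hd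
    _ ≤ m * ∑ i ∈ s, (f i - c) ^ 2 * d := by nlinarith

end Finset

lemma Real.one_add_le_one_add_sqrt_sq {x : ℝ} (hx : 0 ≤ x) : 1 + x ≤ (1 + √x) ^ 2 := by
  nlinarith [Real.sq_sqrt hx, Real.sqrt_nonneg x]

/-- norm comparison under a weighted mean-zero constraint. -/
theorem norm_comparison_weighted_mean_zero
    (N : ℕ) (hN : 1 ≤ N) (Δv : ℝ) (hΔv : 0 < Δv)
    (L : ℝ) (hL : L = N * Δv)
    (u M : ℕ → ℝ) (hM : ∀ q, 0 < M q)
    (hMnorm : ∑ q ∈ Finset.Icc 1 N, M q * Δv = 1)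
    (horth : ∑ q ∈ Finset.Icc 1 N, u q * M q * Δv = 0)
    (Mmax : ℝ)
    (hMmax : Mmax = (Finset.Icc 1 N).sup' (by simp [Finset.nonempty_Icc]; omega) M)
    (ubar : ℝ) (hubar : ubar = (1 / (N : ℝ)) * ∑ q ∈ Finset.Icc 1 N, u q) :
    ∑ q ∈ Finset.Icc 1 N, (u q)^2 * Δv
      ≤ (1 + Real.sqrt (L * Mmax))^2 *
          ∑ q ∈ Finset.Icc 1 N, (u q - ubar)^2 * Δv := by
  have hne : (Icc 1 N).Nonempty := nonempty_Icc.mpr hN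
  have hcard : (#(Icc 1 N) : ℝ) = N := by simp
  have hMle : ∀ q ∈ Icc 1 N, M q ≤ Mmax := fun q hq => hMmax ▸ le_sup' M hq
  have hmean : ∑ q ∈ Icc 1 N, (u q - ubar) = 0 := by
    rw [hubar, ← hcard]
    exact sum_sub_mean_eq_zero _ hne u
  have hubar_sq : ubar ^ 2 ≤ Mmax * ∑ q ∈ Icc 1 N, (u q - ubar) ^ 2 * Δv :=
    sq_le_mul_sum_sub_sq_of_sum_mul_eq_zero _ hΔv.le (fun q _ => (hM q).le) hMle hMnorm horth ubar
  have hL0 : 0 ≤ L := hL ▸ by positivity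
  have hLM : 0 ≤ L * Mmax :=
    mul_nonneg hL0 ((hM 1).le.trans (hMle 1 (left_mem_Icc.mpr hN)))
  have hw : 0 ≤ ∑ q ∈ Icc 1 N, (u q - ubar) ^ 2 * Δv := sum_nonneg fun _ _ => by positivity
  rw [sum_sq_mul_eq_of_sum_sub_eq_zero _ hmean, hcard, ← hL]
  calc ∑ q ∈ Icc 1 N, (u q - ubar) ^ 2 * Δv + ubar ^ 2 * L
      ≤ (1 + L * Mmax) * ∑ q ∈ Icc 1 N, (u q - ubar) ^ 2 * Δv := by
        nlinarith [mul_le_mul_of_nonneg_left hubar_sq hL0]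
    _ ≤ (1 + √(L * Mmax)) ^ 2 * ∑ q ∈ Icc 1 N, (u q - ubar) ^ 2 * Δv :=
        mul_le_mul_of_nonneg_right (Real.one_add_le_one_add_sqrt_sq hLM) hw
end

section
/- Fluctuation-based projection bound: suppose the discrete Fokker–Planck operator has the separable form L_h = β ⊗ T^{(α)} + β^{−1} ⊗ T^{(1/α)}, where β acts as multiplication by a positive spatial grid function and T^{(α)}, T^{(1/α)} are velocity operators with operator norms ≤ 2α_max/Δv² and ≤ 2/(α_min Δv²) respectively. Let P_X be an orthogonal projection acting only on the spatial variable. Then for any f in the range of P_X ⊗ I, ‖(I − P_X ⊗ I) L_h f‖ ≤ κ_h ‖f‖ with κ_h = ‖δβ‖_∞ (2α_max/Δv² + C_β · 2/(α_min Δv²)), where δβ = β − β̄ for the spatial mean β̄ and C_β = max_p (β_p β̄)^{−1}. -/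
open Finset Real

lemma l2tri0 {ι : Type*} (s : Finset ι) (a b : ι → ℝ) :
    Real.sqrt (∑ i ∈ s, (a i + b i)^2)
      ≤ Real.sqrt (∑ i ∈ s, (a i)^2) + Real.sqrt (∑ i ∈ s, (b i)^2) := by
  have hA : 0 ≤ ∑ i ∈ s, (a i)^2 := Finset.sum_nonneg fun i _ => sq_nonneg _
  have hB : 0 ≤ ∑ i ∈ s, (b i)^2 := Finset.sum_nonneg fun i _ => sq_nonneg _
  have hcs : ∑ i ∈ s, a i * b i
      ≤ Real.sqrt (∑ i ∈ s, (a i)^2) * Real.sqrt (∑ i ∈ s, (b i)^2) := by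
    calc ∑ i ∈ s, a i * b i ≤ |∑ i ∈ s, a i * b i| := le_abs_self _
      _ = Real.sqrt ((∑ i ∈ s, a i * b i)^2) := (Real.sqrt_sq_eq_abs _).symm
      _ ≤ Real.sqrt ((∑ i ∈ s, (a i)^2) * ∑ i ∈ s, (b i)^2) :=
          Real.sqrt_le_sqrt (sum_mul_sq_le_sq_mul_sq s a b)
      _ = _ := Real.sqrt_mul hA _
  have key : ∑ i ∈ s, (a i + b i)^2
      ≤ (Real.sqrt (∑ i ∈ s, (a i)^2) + Real.sqrt (∑ i ∈ s, (b i)^2))^2 := by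
    have h1 : ∑ i ∈ s, (a i + b i)^2
        = ∑ i ∈ s, (a i)^2 + 2 * (∑ i ∈ s, a i * b i) + ∑ i ∈ s, (b i)^2 := by
      rw [Finset.mul_sum, ← Finset.sum_add_distrib, ← Finset.sum_add_distrib]
      exact Finset.sum_congr rfl fun i _ => by ring
    rw [h1, add_sq, Real.sq_sqrt hA, Real.sq_sqrt hB]
    nlinarith [hcs]
  calc Real.sqrt (∑ i ∈ s, (a i + b i)^2)
      ≤ Real.sqrt ((Real.sqrt (∑ i ∈ s, (a i)^2) + Real.sqrt (∑ i ∈ s, (b i)^2))^2) :=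
        Real.sqrt_le_sqrt key
    _ = _ := Real.sqrt_sq (by positivity)

lemma l2tri {ι : Type*} (s : Finset ι) (a b : ι → ℝ) (c : ℝ) :
    Real.sqrt (∑ i ∈ s, (a i + b i)^2 * c)
      ≤ Real.sqrt (∑ i ∈ s, (a i)^2 * c) + Real.sqrt (∑ i ∈ s, (b i)^2 * c) := by
  have h : ∀ g : ι → ℝ, Real.sqrt (∑ i ∈ s, (g i)^2 * c)
      = Real.sqrt (∑ i ∈ s, (g i)^2) * Real.sqrt c := by
    intro g
    rw [← Finset.sum_mul, Real.sqrt_mul (Finset.sum_nonneg fun i _ => sq_nonneg _)]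
  rw [h, h, h, ← add_mul]
  exact mul_le_mul_of_nonneg_right (l2tri0 s a b) (Real.sqrt_nonneg _)

/-- Matrix representation on a window: if `T` is `L²`-bounded on the window `V`, then for
`q ∈ V` the value `T w q` only depends on `w` restricted to `V`, linearly. -/
lemma matrix_rep (Nv : ℕ) (Δv : ℝ) (hΔv : 0 < Δv) (C : ℝ)
    (T : (ℕ → ℝ) →ₗ[ℝ] (ℕ → ℝ))
    (hT : ∀ w : ℕ → ℝ,
      Real.sqrt (∑ q ∈ Finset.Icc 1 Nv, (T w q)^2 * Δv)
        ≤ C * Real.sqrt (∑ q ∈ Finset.Icc 1 Nv, (w q)^2 * Δv))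
    (w : ℕ → ℝ) (q : ℕ) (hq : q ∈ Finset.Icc 1 Nv) :
    T w q = ∑ q' ∈ Finset.Icc 1 Nv,
      w q' * T (fun q'' => if q'' = q' then 1 else 0) q := by
  set V := Finset.Icc 1 Nv
  set e : ℕ → ℕ → ℝ := fun q' q'' => if q'' = q' then 1 else 0 with he
  set r : ℕ → ℝ := w - ∑ q' ∈ V, w q' • e q' with hr
  have hrzero : ∀ q'' ∈ V, r q'' = 0 := by
    intro q'' hq''
    simp only [hr, Pi.sub_apply, Finset.sum_apply, Pi.smul_apply, smul_eq_mul, he]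
    rw [Finset.sum_eq_single q'']
    · simp
    · intro b hb hne; simp [Ne.symm hne]
    · intro h; exact absurd hq'' h
  have hTr : T r q = 0 := by
    have h0 : ∑ q'' ∈ V, (r q'')^2 * Δv = 0 := by
      apply Finset.sum_eq_zero; intro q'' hq''; rw [hrzero q'' hq'']; ring
    have := hT r
    rw [h0, Real.sqrt_zero, mul_zero] at this
    have hsum : ∑ q'' ∈ V, (T r q'')^2 * Δv = 0 := by
      have hnn : 0 ≤ ∑ q'' ∈ V, (T r q'')^2 * Δv :=
        Finset.sum_nonneg fun i _ => mul_nonneg (sq_nonneg _) hΔv.le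
      have hle : ∑ q'' ∈ V, (T r q'')^2 * Δv ≤ 0 :=
        Real.sqrt_eq_zero'.mp (le_antisymm this (Real.sqrt_nonneg _))
      linarith
    have := (Finset.sum_eq_zero_iff_of_nonneg
      (fun i _ => mul_nonneg (sq_nonneg _) hΔv.le)).mp hsum q hq
    have h2 : (T r q)^2 = 0 := by
      rcases mul_eq_zero.mp this with h | h
      · exact h
      · exact absurd h hΔv.ne'
    exact pow_eq_zero_iff (by norm_num) |>.mp h2
  have hw : w = (∑ q' ∈ V, w q' • e q') + r := by rw [hr]; ring
  calc T w q = T ((∑ q' ∈ V, w q' • e q') + r) q := by rw [← hw]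
    _ = T (∑ q' ∈ V, w q' • e q') q + T r q := by rw [map_add]; rfl
    _ = T (∑ q' ∈ V, w q' • e q') q := by rw [hTr, add_zero]
    _ = ∑ q' ∈ V, w q' * T (e q') q := by
        rw [map_sum]
        rw [Finset.sum_apply]
        exact Finset.sum_congr rfl fun q' _ => by rw [map_smul]; rfl

/-- fluctuation-based projection bound for the separable discrete
Fokker–Planck operator `L_h = β ⊗ T^{(α)} + β⁻¹ ⊗ T^{(1/α)}`. -/
theorem fluctuation_projection_bound
    (Nx Nv : ℕ) (hNx : 1 ≤ Nx) (hNv : 1 ≤ Nv)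
    (Δx Δv : ℝ) (hΔx : 0 < Δx) (hΔv : 0 < Δv)
    (αmin αmax : ℝ) (hαmin : 0 < αmin) (hαmax : 0 < αmax)
    (β : ℕ → ℝ) (hβ : ∀ p, 0 < β p)
    (βbar : ℝ) (hβbar : βbar = (1 / (Nx : ℝ)) * ∑ p ∈ Finset.Icc 1 Nx, β p)
    (δmax : ℝ)
    (hδ : δmax = (Finset.Icc 1 Nx).sup' (by simp [Finset.nonempty_Icc]; omega)
      (fun p => |β p - βbar|))
    (Cβ : ℝ)
    (hCβ : Cβ = (Finset.Icc 1 Nx).sup' (by simp [Finset.nonempty_Icc]; omega)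
      (fun p => (β p * βbar)⁻¹))
    -- velocity operators with their operator-norm bounds
    (Tα Tinv : (ℕ → ℝ) →ₗ[ℝ] (ℕ → ℝ))
    (hTα : ∀ w : ℕ → ℝ,
      Real.sqrt (∑ q ∈ Finset.Icc 1 Nv, (Tα w q)^2 * Δv)
        ≤ (2 * αmax / Δv^2) * Real.sqrt (∑ q ∈ Finset.Icc 1 Nv, (w q)^2 * Δv))
    (hTinv : ∀ w : ℕ → ℝ,
      Real.sqrt (∑ q ∈ Finset.Icc 1 Nv, (Tinv w q)^2 * Δv)
        ≤ (2 / (αmin * Δv^2)) * Real.sqrt (∑ q ∈ Finset.Icc 1 Nv, (w q)^2 * Δv))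
    -- spatial orthogonal projection
    (PX : (ℕ → ℝ) →ₗ[ℝ] (ℕ → ℝ))
    (hPX2 : ∀ φ, PX (PX φ) = PX φ)
    (hPXsym : ∀ φ ψ : ℕ → ℝ,
      ∑ p ∈ Finset.Icc 1 Nx, (PX φ) p * ψ p * Δx
        = ∑ p ∈ Finset.Icc 1 Nx, φ p * (PX ψ) p * Δx)
    -- f in the range of PX ⊗ I
    (f : ℕ → ℕ → ℝ)
    (hf : ∀ p q, PX (fun p' => f p' q) p = f p q)
    (Lhf : ℕ → ℕ → ℝ)
    (hLhf : ∀ p q, Lhf p q = β p * Tα (f p) q + (β p)⁻¹ * Tinv (f p) q)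
    (κ : ℝ)
    (hκ : κ = δmax * (2 * αmax / Δv^2 + Cβ * (2 / (αmin * Δv^2)))) :
    Real.sqrt (∑ p ∈ Finset.Icc 1 Nx, ∑ q ∈ Finset.Icc 1 Nv,
        (Lhf p q - PX (fun p' => Lhf p' q) p)^2 * (Δx * Δv))
      ≤ κ * Real.sqrt (∑ p ∈ Finset.Icc 1 Nx, ∑ q ∈ Finset.Icc 1 Nv,
          (f p q)^2 * (Δx * Δv)) := by
  set X := Finset.Icc 1 Nx with hX
  set V := Finset.Icc 1 Nv with hV
  have hXne : (1 : ℕ) ∈ X := by simp [hX]; omega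
  -- basic positivity
  have hβbarpos : 0 < βbar := by
    rw [hβbar]
    apply mul_pos
    · have : (0:ℝ) < (Nx:ℝ) := by exact_mod_cast Nat.pos_of_ne_zero (by omega)
      positivity
    · exact Finset.sum_pos (fun p _ => hβ p) ⟨1, hXne⟩
  set Ca : ℝ := 2 * αmax / Δv^2 with hCa
  set Ci : ℝ := 2 / (αmin * Δv^2) with hCi
  have hCapos : 0 ≤ Ca := by positivity
  have hCipos : 0 ≤ Ci := by positivity
  have hδnn : 0 ≤ δmax := by
    rw [hδ]
    exact le_trans (abs_nonneg (β 1 - βbar)) (Finset.le_sup' (fun p => |β p - βbar|) hXne)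
  have hδle : ∀ p ∈ X, |β p - βbar| ≤ δmax := fun p hp => hδ ▸ Finset.le_sup' (fun p => |β p - βbar|) hp
  have hCβle : ∀ p ∈ X, (β p * βbar)⁻¹ ≤ Cβ := fun p hp => hCβ ▸ Finset.le_sup' (fun p => (β p * βbar)⁻¹) hp
  have hCβnn : 0 ≤ Cβ := le_trans (inv_nonneg.mpr (mul_nonneg (hβ 1).le hβbarpos.le)) (hCβle 1 hXne)
  -- fluctuation coefficients
  set δ : ℕ → ℝ := fun p => β p - βbar with hδdef
  set ε : ℕ → ℝ := fun p => (β p)⁻¹ - βbar⁻¹ with hεdef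
  have hεle : ∀ p ∈ X, |ε p| ≤ Cβ * δmax := by
    intro p hp
    have hβp := hβ p
    have heq : ε p = (βbar - β p) * (β p * βbar)⁻¹ := by
      simp only [hεdef]
      field_simp
    rw [heq, abs_mul, abs_of_nonneg (inv_nonneg.mpr (mul_nonneg (hβ p).le hβbarpos.le))]
    have h1 : |βbar - β p| ≤ δmax := by rw [abs_sub_comm]; exact hδle p hp
    calc |βbar - β p| * (β p * βbar)⁻¹ ≤ δmax * Cβ := by
          apply mul_le_mul h1 (hCβle p hp) (inv_nonneg.mpr (mul_nonneg (hβ p).le hβbarpos.le)) hδnn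
      _ = Cβ * δmax := by ring
  -- matrix representations
  have hmatα := matrix_rep Nv Δv hΔv Ca Tα hTα
  have hmatinv := matrix_rep Nv Δv hΔv Ci Tinv hTinv
  -- the mean part, fixed by PX
  set u : ℕ → ℕ → ℝ := fun q p => βbar * Tα (f p) q + βbar⁻¹ * Tinv (f p) q with hu
  set g1 : ℕ → ℕ → ℝ := fun p q => δ p * Tα (f p) q with hg1
  set g2 : ℕ → ℕ → ℝ := fun p q => ε p * Tinv (f p) q with hg2
  set w : ℕ → ℕ → ℝ := fun q p => g1 p q + g2 p q with hw
  have hffix : ∀ q', PX (fun p => f p q') = fun p => f p q' :=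
    fun q' => funext fun p => hf p q'
  have hufix : ∀ q ∈ V, PX (u q) = u q := by
    intro q hq
    have h1 : u q = ∑ q' ∈ V,
        (βbar * Tα (fun q'' => if q'' = q' then 1 else 0) q
          + βbar⁻¹ * Tinv (fun q'' => if q'' = q' then 1 else 0) q) • (fun p => f p q') := by
      funext p
      simp only [hu, Finset.sum_apply, Pi.smul_apply, smul_eq_mul]
      rw [hmatα (f p) q hq, hmatinv (f p) q hq, Finset.mul_sum, Finset.mul_sum,
        ← Finset.sum_add_distrib]
      exact Finset.sum_congr rfl fun q' _ => by ring
    rw [h1, map_sum]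
    simp only [map_smul]
    rw [Finset.sum_congr rfl fun q' _ => by rw [hffix q']]
  -- decomposition of Lhf columns
  have hcol : ∀ q, (fun p' => Lhf p' q) = u q + w q := by
    intro q
    funext p
    simp only [hu, hw, hg1, hg2, hδdef, hεdef, Pi.add_apply, hLhf p q]
    ring
  -- the pointwise identity for the defect
  have hdefect : ∀ q ∈ V, ∀ p,
      Lhf p q - PX (fun p' => Lhf p' q) p = w q p - PX (w q) p := by
    intro q hq p
    have h1 : PX (fun p' => Lhf p' q) = u q + PX (w q) := by
      rw [hcol q, map_add, hufix q hq]
    have h2 : Lhf p q = u q p + w q p := by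
      have := congrFun (hcol q) p
      simpa using this
    rw [h2, h1]
    simp
  -- contraction property of I - PX
  have hcontr : ∀ v : ℕ → ℝ,
      ∑ p ∈ X, (v p - PX v p)^2 * Δx ≤ ∑ p ∈ X, (v p)^2 * Δx := by
    intro v
    have h1 : ∑ p ∈ X, PX v p * v p * Δx = ∑ p ∈ X, PX v p * PX v p * Δx := by
      have := hPXsym (PX v) v
      rw [hPX2 v] at this
      rw [this]
    have hexp : ∑ p ∈ X, (v p - PX v p)^2 * Δx
        = ∑ p ∈ X, (v p)^2 * Δx - 2 * ∑ p ∈ X, PX v p * v p * Δx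
          + ∑ p ∈ X, PX v p * PX v p * Δx := by
      rw [Finset.mul_sum, ← Finset.sum_sub_distrib, ← Finset.sum_add_distrib]
      exact Finset.sum_congr rfl fun p _ => by ring
    have hnn : 0 ≤ ∑ p ∈ X, PX v p * PX v p * Δx :=
      Finset.sum_nonneg fun p _ => mul_nonneg (mul_self_nonneg _) hΔx.le
    rw [hexp, h1]
    linarith
  -- velocity-norm bounds, squared
  have hsqbd : ∀ (T : (ℕ → ℝ) →ₗ[ℝ] (ℕ → ℝ)) (C : ℝ), 0 ≤ C →
      (∀ v : ℕ → ℝ, Real.sqrt (∑ q ∈ V, (T v q)^2 * Δv)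
        ≤ C * Real.sqrt (∑ q ∈ V, (v q)^2 * Δv)) →
      ∀ v : ℕ → ℝ, ∑ q ∈ V, (T v q)^2 * Δv ≤ C^2 * ∑ q ∈ V, (v q)^2 * Δv := by
    intro T C hC hT v
    have hL : 0 ≤ ∑ q ∈ V, (T v q)^2 * Δv :=
      Finset.sum_nonneg fun q _ => mul_nonneg (sq_nonneg _) hΔv.le
    have hR : 0 ≤ ∑ q ∈ V, (v q)^2 * Δv :=
      Finset.sum_nonneg fun q _ => mul_nonneg (sq_nonneg _) hΔv.le
    calc ∑ q ∈ V, (T v q)^2 * Δv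
        = (Real.sqrt (∑ q ∈ V, (T v q)^2 * Δv))^2 := (Real.sq_sqrt hL).symm
      _ ≤ (C * Real.sqrt (∑ q ∈ V, (v q)^2 * Δv))^2 :=
          pow_le_pow_left₀ (Real.sqrt_nonneg _) (hT v) 2
      _ = C^2 * ∑ q ∈ V, (v q)^2 * Δv := by rw [mul_pow, Real.sq_sqrt hR]
  have hTαsq := hsqbd Tα Ca hCapos hTα
  have hTinvsq := hsqbd Tinv Ci hCipos hTinv
  -- name the target quantities
  set Sf : ℝ := ∑ p ∈ X, ∑ q ∈ V, (f p q)^2 * (Δx * Δv) with hSf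
  have hSfnn : 0 ≤ Sf :=
    Finset.sum_nonneg fun p _ => Finset.sum_nonneg fun q _ =>
      mul_nonneg (sq_nonneg _) (by positivity)
  -- generic bound: a spatially-multiplied operator term
  have hterm : ∀ (c : ℕ → ℝ) (M : ℝ) (T : (ℕ → ℝ) →ₗ[ℝ] (ℕ → ℝ)) (C : ℝ),
      0 ≤ M → 0 ≤ C →
      (∀ p ∈ X, |c p| ≤ M) →
      (∀ v : ℕ → ℝ, ∑ q ∈ V, (T v q)^2 * Δv ≤ C^2 * ∑ q ∈ V, (v q)^2 * Δv) →
      ∑ p ∈ X, ∑ q ∈ V, (c p * T (f p) q)^2 * (Δx * Δv) ≤ (M * C)^2 * Sf := by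
    intro c M T C hM hC hc hT2
    have hper : ∀ p ∈ X, ∑ q ∈ V, (c p * T (f p) q)^2 * (Δx * Δv)
        ≤ (M * C)^2 * ∑ q ∈ V, (f p q)^2 * (Δx * Δv) := by
      intro p hp
      have e1 : ∑ q ∈ V, (c p * T (f p) q)^2 * (Δx * Δv)
          = (c p)^2 * (∑ q ∈ V, (T (f p) q)^2 * Δv) * Δx := by
        rw [Finset.mul_sum, Finset.sum_mul]
        exact Finset.sum_congr rfl fun q _ => by ring
      have e2 : (M * C)^2 * ∑ q ∈ V, (f p q)^2 * (Δx * Δv)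
          = M^2 * (C^2 * ∑ q ∈ V, (f p q)^2 * Δv) * Δx := by
        rw [Finset.mul_sum, Finset.mul_sum, Finset.mul_sum, Finset.sum_mul]
        exact Finset.sum_congr rfl fun q _ => by ring
      rw [e1, e2]
      have hcp2 : (c p)^2 ≤ M^2 := by
        have := hc p hp
        calc (c p)^2 = |c p|^2 := (sq_abs _).symm
          _ ≤ M^2 := pow_le_pow_left₀ (abs_nonneg _) this 2
      have hTnn : 0 ≤ ∑ q ∈ V, (T (f p) q)^2 * Δv :=
        Finset.sum_nonneg fun q _ => mul_nonneg (sq_nonneg _) hΔv.le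
      apply mul_le_mul_of_nonneg_right _ hΔx.le
      exact mul_le_mul hcp2 (hT2 (f p)) hTnn (sq_nonneg _)
    calc ∑ p ∈ X, ∑ q ∈ V, (c p * T (f p) q)^2 * (Δx * Δv)
        ≤ ∑ p ∈ X, (M * C)^2 * ∑ q ∈ V, (f p q)^2 * (Δx * Δv) :=
          Finset.sum_le_sum hper
      _ = (M * C)^2 * Sf := by rw [hSf, Finset.mul_sum]
  have hbd1 : ∑ p ∈ X, ∑ q ∈ V, (g1 p q)^2 * (Δx * Δv) ≤ (δmax * Ca)^2 * Sf :=
    hterm δ δmax Tα Ca hδnn hCapos hδle hTαsq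
  have hbd2 : ∑ p ∈ X, ∑ q ∈ V, (g2 p q)^2 * (Δx * Δv) ≤ ((Cβ * δmax) * Ci)^2 * Sf :=
    hterm ε (Cβ * δmax) Tinv Ci (by positivity) hCipos hεle hTinvsq
  -- step 1: contraction bound on the defect
  have hstep1 : ∑ p ∈ X, ∑ q ∈ V,
      (Lhf p q - PX (fun p' => Lhf p' q) p)^2 * (Δx * Δv)
      ≤ ∑ p ∈ X, ∑ q ∈ V, (g1 p q + g2 p q)^2 * (Δx * Δv) := by
    have swap : ∀ h : ℕ → ℕ → ℝ, ∑ p ∈ X, ∑ q ∈ V, h p q * (Δx * Δv)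
        = ∑ q ∈ V, (∑ p ∈ X, h p q * Δx) * Δv := by
      intro h
      rw [Finset.sum_comm]
      refine Finset.sum_congr rfl fun q _ => ?_
      rw [Finset.sum_mul]
      exact Finset.sum_congr rfl fun p _ => by ring
    rw [swap (fun p q => (Lhf p q - PX (fun p' => Lhf p' q) p)^2),
      swap (fun p q => (g1 p q + g2 p q)^2)]
    apply Finset.sum_le_sum
    intro q hq
    apply mul_le_mul_of_nonneg_right _ hΔv.le
    have heq : ∑ p ∈ X, (Lhf p q - PX (fun p' => Lhf p' q) p)^2 * Δx
        = ∑ p ∈ X, (w q p - PX (w q) p)^2 * Δx := by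
      exact Finset.sum_congr rfl fun p _ => by rw [hdefect q hq p]
    rw [heq]
    have := hcontr (w q)
    calc ∑ p ∈ X, (w q p - PX (w q) p)^2 * Δx ≤ ∑ p ∈ X, (w q p)^2 * Δx := this
      _ = ∑ p ∈ X, (g1 p q + g2 p q)^2 * Δx := by
          exact Finset.sum_congr rfl fun p _ => by simp [hw]
  -- step 2: triangle inequality
  have hprod : ∀ h : ℕ → ℕ → ℝ, ∑ p ∈ X, ∑ q ∈ V, h p q * (Δx * Δv)
      = ∑ i ∈ X ×ˢ V, h i.1 i.2 * (Δx * Δv) :=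
    fun h => (Finset.sum_product X V fun i => h i.1 i.2 * (Δx * Δv)).symm
  have hstep2 : Real.sqrt (∑ p ∈ X, ∑ q ∈ V, (g1 p q + g2 p q)^2 * (Δx * Δv))
      ≤ Real.sqrt (∑ p ∈ X, ∑ q ∈ V, (g1 p q)^2 * (Δx * Δv))
        + Real.sqrt (∑ p ∈ X, ∑ q ∈ V, (g2 p q)^2 * (Δx * Δv)) := by
    rw [hprod (fun p q => (g1 p q + g2 p q)^2), hprod (fun p q => (g1 p q)^2),
      hprod (fun p q => (g2 p q)^2)]
    exact l2tri (X ×ˢ V) (fun i => g1 i.1 i.2) (fun i => g2 i.1 i.2) (Δx * Δv)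
  -- step 3: put everything together
  have hsq1 : Real.sqrt (∑ p ∈ X, ∑ q ∈ V, (g1 p q)^2 * (Δx * Δv))
      ≤ δmax * Ca * Real.sqrt Sf := by
    calc Real.sqrt (∑ p ∈ X, ∑ q ∈ V, (g1 p q)^2 * (Δx * Δv))
        ≤ Real.sqrt ((δmax * Ca)^2 * Sf) := Real.sqrt_le_sqrt hbd1
      _ = δmax * Ca * Real.sqrt Sf := by
          rw [Real.sqrt_mul (sq_nonneg _), Real.sqrt_sq (by positivity)]
  have hsq2 : Real.sqrt (∑ p ∈ X, ∑ q ∈ V, (g2 p q)^2 * (Δx * Δv))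
      ≤ Cβ * δmax * Ci * Real.sqrt Sf := by
    calc Real.sqrt (∑ p ∈ X, ∑ q ∈ V, (g2 p q)^2 * (Δx * Δv))
        ≤ Real.sqrt (((Cβ * δmax) * Ci)^2 * Sf) := Real.sqrt_le_sqrt hbd2
      _ = Cβ * δmax * Ci * Real.sqrt Sf := by
          rw [Real.sqrt_mul (sq_nonneg _), Real.sqrt_sq (by positivity)]
  calc Real.sqrt (∑ p ∈ X, ∑ q ∈ V,
        (Lhf p q - PX (fun p' => Lhf p' q) p)^2 * (Δx * Δv))
      ≤ Real.sqrt (∑ p ∈ X, ∑ q ∈ V, (g1 p q + g2 p q)^2 * (Δx * Δv)) :=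
        Real.sqrt_le_sqrt hstep1
    _ ≤ Real.sqrt (∑ p ∈ X, ∑ q ∈ V, (g1 p q)^2 * (Δx * Δv))
        + Real.sqrt (∑ p ∈ X, ∑ q ∈ V, (g2 p q)^2 * (Δx * Δv)) := hstep2
    _ ≤ δmax * Ca * Real.sqrt Sf + Cβ * δmax * Ci * Real.sqrt Sf := add_le_add hsq1 hsq2
    _ = κ * Real.sqrt Sf := by rw [hκ, hCa, hCi]; ring
end

section
/- Exact AP property for spatially constant field: in the setting of the main AP theorem, if the spatial weight β is constant (δβ ≡ 0, hence κ_h = 0), then ‖f − ρM‖ ≤ (M_max/γ_h) ε ‖G‖; in particular f converges to the local equilibrium ρM at rate O(ε) as ε → 0 with G bounded. -/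
/-- exact AP property for a spatially constant field (`κ_h = 0`):
the solution is `O(ε)`-close to the local equilibrium `ρM`. -/
theorem AP_exact_constant_field
    (Nx Nv : ℕ) (hNx : 1 ≤ Nx) (hNv : 1 ≤ Nv)
    (Δx Δv : ℝ) (hΔx : 0 < Δx) (hΔv : 0 < Δv)
    (M : ℕ → ℕ → ℝ) (hM : ∀ p q, 0 < M p q)
    (hMnorm : ∀ p, ∑ q ∈ Finset.Icc 1 Nv, M p q * Δv = 1)
    (Mmax : ℝ)
    (hMmax : Mmax = ((Finset.Icc 1 Nx) ×ˢ (Finset.Icc 1 Nv)).sup'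
      (by refine Finset.Nonempty.product ?_ ?_ <;> (simp [Finset.nonempty_Icc]; omega))
      (fun pq => M pq.1 pq.2))
    (Lh : (ℕ → ℕ → ℝ) →ₗ[ℝ] (ℕ → ℕ → ℝ))
    (PX : (ℕ → ℝ) →ₗ[ℝ] (ℕ → ℝ))
    (γh : ℝ) (hγ : 0 < γh)
    -- coercivity
    (hcoer : ∀ f' : ℕ → ℕ → ℝ,
      -(∑ p ∈ Finset.Icc 1 Nx, ∑ q ∈ Finset.Icc 1 Nv,
          Lh f' p q * ((f' p q - (∑ q' ∈ Finset.Icc 1 Nv, f' p q' * Δv) * M p q) / M p q)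
            * (Δx * Δv))
        ≥ γh * ∑ p ∈ Finset.Icc 1 Nx, ∑ q ∈ Finset.Icc 1 Nv,
            ((f' p q - (∑ q' ∈ Finset.Icc 1 Nv, f' p q' * Δv) * M p q) / M p q)^2
              * (Δx * Δv))
    (ε : ℝ) (hε : 0 ≤ ε)
    (f G : ℕ → ℕ → ℝ)
    (hfP : ∀ p q, PX (fun p' => f p' q) p = f p q)
    -- constant field: (I − P_X) L_h f = 0 and P_X L_h f = ε G, i.e. L_h f = ε G
    (hortho : ∀ p q, PX (fun p' => Lh f p' q) p = Lh f p q)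
    (hG : ∀ p q, PX (fun p' => Lh f p' q) p = ε * G p q)
    (ρ : ℕ → ℝ) (hρ : ∀ p, ρ p = ∑ q ∈ Finset.Icc 1 Nv, f p q * Δv) :
    Real.sqrt (∑ p ∈ Finset.Icc 1 Nx, ∑ q ∈ Finset.Icc 1 Nv,
        (f p q - ρ p * M p q)^2 * (Δx * Δv))
      ≤ (Mmax / γh) * ε *
          Real.sqrt (∑ p ∈ Finset.Icc 1 Nx, ∑ q ∈ Finset.Icc 1 Nv,
            (G p q)^2 * (Δx * Δv)) := by
  classical
  set s : Finset (ℕ × ℕ) := (Finset.Icc 1 Nx) ×ˢ (Finset.Icc 1 Nv) with hs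
  have hc : (0:ℝ) < Δx * Δv := mul_pos hΔx hΔv
  -- L_h f = ε G
  have hLf : ∀ p q, Lh f p q = ε * G p q := fun p q => by
    rw [← hortho p q, hG p q]
  -- the fluctuation and its M-weighted version
  set w : ℕ → ℕ → ℝ := fun p q => (f p q - ρ p * M p q) / M p q with hw
  -- abbreviations
  set A : ℝ := ∑ p ∈ Finset.Icc 1 Nx, ∑ q ∈ Finset.Icc 1 Nv, (w p q)^2 with hA
  set N : ℝ := ∑ p ∈ Finset.Icc 1 Nx, ∑ q ∈ Finset.Icc 1 Nv, (G p q)^2 with hN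
  have hA0 : 0 ≤ A := Finset.sum_nonneg fun p _ =>
    Finset.sum_nonneg fun q _ => sq_nonneg _
  have hN0 : 0 ≤ N := Finset.sum_nonneg fun p _ =>
    Finset.sum_nonneg fun q _ => sq_nonneg _
  -- coercivity specialized
  have hco := hcoer f
  have hρ' : ∀ p q, (f p q - (∑ q' ∈ Finset.Icc 1 Nv, f p q' * Δv) * M p q) / M p q = w p q := by
    intro p q; simp only [hw, hρ]
  have hco' : γh * (A * (Δx * Δv)) ≤ -((∑ p ∈ Finset.Icc 1 Nx, ∑ q ∈ Finset.Icc 1 Nv,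
      ε * G p q * w p q) * (Δx * Δv)) := by
    have h1 : (∑ p ∈ Finset.Icc 1 Nx, ∑ q ∈ Finset.Icc 1 Nv,
        Lh f p q * ((f p q - (∑ q' ∈ Finset.Icc 1 Nv, f p q' * Δv) * M p q) / M p q)
          * (Δx * Δv))
        = (∑ p ∈ Finset.Icc 1 Nx, ∑ q ∈ Finset.Icc 1 Nv, ε * G p q * w p q) * (Δx * Δv) := by
      rw [Finset.sum_mul]
      refine Finset.sum_congr rfl fun p _ => ?_
      rw [Finset.sum_mul]
      exact Finset.sum_congr rfl fun q _ => by rw [hLf, hρ']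
    have h2 : (∑ p ∈ Finset.Icc 1 Nx, ∑ q ∈ Finset.Icc 1 Nv,
        ((f p q - (∑ q' ∈ Finset.Icc 1 Nv, f p q' * Δv) * M p q) / M p q)^2 * (Δx * Δv))
        = A * (Δx * Δv) := by
      rw [hA, Finset.sum_mul]
      refine Finset.sum_congr rfl fun p _ => ?_
      rw [Finset.sum_mul]
      exact Finset.sum_congr rfl fun q _ => by rw [hρ']
    rw [← h1, ← h2]
    exact hco
  -- Cauchy-Schwarz: -(∑ ε G w) ≤ ε √N √A
  have hCS : -(∑ p ∈ Finset.Icc 1 Nx, ∑ q ∈ Finset.Icc 1 Nv, ε * G p q * w p q)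
      ≤ ε * (Real.sqrt N * Real.sqrt A) := by
    have h1 : ε * (∑ pq ∈ s, (- G pq.1 pq.2) * w pq.1 pq.2)
        = -(∑ p ∈ Finset.Icc 1 Nx, ∑ q ∈ Finset.Icc 1 Nv, ε * G p q * w p q) := by
      rw [hs, Finset.sum_product, Finset.mul_sum, ← Finset.sum_neg_distrib]
      refine Finset.sum_congr rfl fun p _ => ?_
      rw [Finset.mul_sum, ← Finset.sum_neg_distrib]
      exact Finset.sum_congr rfl fun q _ => by ring
    rw [← h1]
    refine mul_le_mul_of_nonneg_left ?_ hε
    calc (∑ pq ∈ s, (- G pq.1 pq.2) * w pq.1 pq.2)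
        ≤ Real.sqrt (∑ pq ∈ s, (- G pq.1 pq.2)^2) * Real.sqrt (∑ pq ∈ s, (w pq.1 pq.2)^2) := by
          have hcs := Finset.sum_mul_sq_le_sq_mul_sq s (fun pq => - G pq.1 pq.2)
            (fun pq => w pq.1 pq.2)
          have h2 : (∑ pq ∈ s, (- G pq.1 pq.2) * w pq.1 pq.2)
              ≤ |∑ pq ∈ s, (- G pq.1 pq.2) * w pq.1 pq.2| := le_abs_self _
          refine h2.trans ?_
          rw [← Real.sqrt_sq_eq_abs, ← Real.sqrt_mul (Finset.sum_nonneg fun _ _ => sq_nonneg _)]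
          exact Real.sqrt_le_sqrt hcs
      _ = Real.sqrt N * Real.sqrt A := by
          congr 1
          · congr 1; rw [hN, hs, Finset.sum_product]
            exact Finset.sum_congr rfl fun p _ => Finset.sum_congr rfl fun q _ => by ring
          · congr 1; rw [hA, hs, Finset.sum_product]
  -- conclude γh √A ≤ ε √N
  have hkey : Real.sqrt A ≤ ε * Real.sqrt N / γh := by
    have h3 : γh * A ≤ ε * (Real.sqrt N * Real.sqrt A) := by
      have h4 := mul_le_mul_of_nonneg_right hCS hc.le
      have h5 : γh * A * (Δx * Δv) ≤ ε * (Real.sqrt N * Real.sqrt A) * (Δx * Δv) := by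
        nlinarith [hco']
      exact le_of_mul_le_mul_right h5 hc
    have hAsq : A = Real.sqrt A * Real.sqrt A := (Real.mul_self_sqrt hA0).symm
    rcases eq_or_lt_of_le (Real.sqrt_nonneg A) with h | h
    · rw [← h]; positivity
    · rw [le_div_iff₀ hγ]
      have h6 : (γh * Real.sqrt A) * Real.sqrt A ≤ (ε * Real.sqrt N) * Real.sqrt A := by
        nlinarith [h3, hAsq]
      have := le_of_mul_le_mul_right h6 h
      linarith
  -- bound ‖g‖ by Mmax ‖w‖
  have hmem11 : ((1,1) : ℕ × ℕ) ∈ (Finset.Icc 1 Nx) ×ˢ (Finset.Icc 1 Nv) := by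
    simp [Finset.mem_Icc]; omega
  have hMmax_pos : 0 < Mmax := by
    rw [hMmax]
    exact lt_of_lt_of_le (hM 1 1) (Finset.le_sup' (f := fun pq => M pq.1 pq.2) hmem11)
  have hMle : ∀ p q, p ∈ Finset.Icc 1 Nx → q ∈ Finset.Icc 1 Nv → M p q ≤ Mmax := by
    intro p q hp hq
    rw [hMmax]
    exact Finset.le_sup' (f := fun pq => M pq.1 pq.2) (b := (p, q))
      (Finset.mem_product.mpr ⟨hp, hq⟩)
  have h7 : Mmax^2 * (A * (Δx * Δv)) = ∑ p ∈ Finset.Icc 1 Nx, ∑ q ∈ Finset.Icc 1 Nv,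
      Mmax^2 * ((w p q)^2 * (Δx * Δv)) := by
    rw [hA, Finset.sum_mul, Finset.mul_sum]
    refine Finset.sum_congr rfl fun p _ => ?_
    rw [Finset.sum_mul, Finset.mul_sum]
  have hB : (∑ p ∈ Finset.Icc 1 Nx, ∑ q ∈ Finset.Icc 1 Nv,
      (f p q - ρ p * M p q)^2 * (Δx * Δv)) ≤ Mmax^2 * (A * (Δx * Δv)) := by
    rw [h7]
    refine Finset.sum_le_sum fun p hp => Finset.sum_le_sum fun q hq => ?_
    have hMpq := hM p q
    have hg : f p q - ρ p * M p q = w p q * M p q := by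
      rw [hw]; field_simp
    have hM2 : (M p q)^2 ≤ Mmax^2 :=
      pow_le_pow_left₀ hMpq.le (hMle p q hp hq) 2
    rw [hg]
    nlinarith [sq_nonneg (w p q), hc.le, mul_le_mul_of_nonneg_left hM2 (sq_nonneg (w p q)),
      mul_le_mul_of_nonneg_right (mul_le_mul_of_nonneg_left hM2 (sq_nonneg (w p q))) hc.le]
  calc Real.sqrt (∑ p ∈ Finset.Icc 1 Nx, ∑ q ∈ Finset.Icc 1 Nv,
        (f p q - ρ p * M p q)^2 * (Δx * Δv))
      ≤ Real.sqrt (Mmax^2 * (A * (Δx * Δv))) := Real.sqrt_le_sqrt hB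
    _ = Mmax * (Real.sqrt A * Real.sqrt (Δx * Δv)) := by
        rw [Real.sqrt_mul (sq_nonneg _), Real.sqrt_sq hMmax_pos.le,
          Real.sqrt_mul hA0]
    _ ≤ Mmax * ((ε * Real.sqrt N / γh) * Real.sqrt (Δx * Δv)) := by
        refine mul_le_mul_of_nonneg_left ?_ hMmax_pos.le
        exact mul_le_mul_of_nonneg_right hkey (Real.sqrt_nonneg _)
    _ = (Mmax / γh) * ε * (Real.sqrt N * Real.sqrt (Δx * Δv)) := by ring
    _ = (Mmax / γh) * ε * Real.sqrt (∑ p ∈ Finset.Icc 1 Nx, ∑ q ∈ Finset.Icc 1 Nv,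
          (G p q)^2 * (Δx * Δv)) := by
        congr 1
        rw [← Real.sqrt_mul hN0, hN, Finset.sum_mul]
        congr 1
        exact Finset.sum_congr rfl fun p _ => by rw [Finset.sum_mul]
end
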